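/- Let λ = (λ_1, λ_2, …, λ_n) be a partition all of whose parts are even, and let α = (λ_1/2, λ_2/2, …, λ_n/2). Then the Littlewood–Richardson coefficient c^λ_{αα} is at least 1. -/

import Mathlib

/-- A partition: a weakly decreasing finite sequence (list) of positive
integers. -/
def IsPartition (l : List ℕ) : Prop :=
  l.Pairwise (· ≥ ·) ∧ ∀ x ∈ l, 0 < x

/-- The `i`-th part (0-indexed) of a partition, `0` beyond its length. -/
def part (l : List ℕ) (i : ℕ) : ℕ := l.getD i 0

/-- Cell `(i, j)` (row `i`, column `j`, both 0-indexed) lies in the skew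
Young diagram `ν/λ`. -/
def InSkew (nu lam : List ℕ) (i j : ℕ) : Prop :=
  part lam i ≤ j ∧ j < part nu i

/-- Cell `(i, j)` comes weakly before cell `(r, c)` in the reverse reading
order: rows are read top to bottom, and each row is read right to left. -/
def ReadingLE (i j r c : ℕ) : Prop := i < r ∨ (i = r ∧ c ≤ j)

/-- `T` is a Littlewood–Richardson tableau of shape `ν/λ` and content `μ`:
`λ ⊆ ν`, the entries of `T` are positive exactly on the cells of the skew
diagram `ν/λ`, entries weakly increase from left to right along rows,
entries strictly increase from top to bottom down columns, for every `j ≥ 1`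
the entry `j` occurs exactly `μ_j` times, and the reverse reading word is a
lattice word: every prefix contains at least as many occurrences of `j` as
of `j + 1`, for every `j ≥ 1`. -/
structure IsLRTableau (nu lam mu : List ℕ) (T : ℕ → ℕ → ℕ) : Prop where
  subset : ∀ i, part lam i ≤ part nu i
  support : ∀ i j, 0 < T i j ↔ InSkew nu lam i j
  row_weak : ∀ i j j', InSkew nu lam i j → InSkew nu lam i j' → j ≤ j' →
    T i j ≤ T i j'
  col_strict : ∀ i i' j, InSkew nu lam i j → InSkew nu lam i' j → i < i' →
    T i j < T i' j
  content : ∀ k : ℕ, {p : ℕ × ℕ | T p.1 p.2 = k + 1}.ncard = part mu k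
  lattice : ∀ r c k : ℕ,
    {p : ℕ × ℕ | T p.1 p.2 = k + 2 ∧ ReadingLE p.1 p.2 r c}.ncard ≤
    {p : ℕ × ℕ | T p.1 p.2 = k + 1 ∧ ReadingLE p.1 p.2 r c}.ncard

/-- The Littlewood–Richardson coefficient `c^ν_{λμ}`: the number of
Littlewood–Richardson tableaux of shape `ν/λ` and content `μ`. -/
noncomputable def lrCoeff (nu lam mu : List ℕ) : ℕ :=
  {T : ℕ → ℕ → ℕ | IsLRTableau nu lam mu T}.ncard

/-- The Newell–Littlewood coefficient
`N^ν_{λμ} = Σ_{α,β,γ} c^λ_{αβ} · c^μ_{αγ} · c^ν_{βγ}`, the sum running over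
all triples of partitions `(α, β, γ)` (only finitely many terms are
nonzero). -/
noncomputable def nlCoeff (lam mu nu : List ℕ) : ℕ :=
  ∑ᶠ x : {l : List ℕ // IsPartition l} × {l : List ℕ // IsPartition l} ×
      {l : List ℕ // IsPartition l},
    lrCoeff lam x.1.val x.2.1.val * lrCoeff mu x.1.val x.2.2.val *
      lrCoeff nu x.2.1.val x.2.2.val

/-!
Fill row `i` of the skew shape `λ/α` with the letter `i + 1`. Rows are filled with distinct
letters, increasing downwards, so rows and columns are ordered correctly. Row `i` of `λ/α` has
`λᵢ - λᵢ/2 = λᵢ/2 = αᵢ` cells, so the content is `α`; and since these row lengths decrease, at any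
point of the reading word the letters `k + 2` read so far (all in row `k + 1`) never outnumber the
letters `k + 1` (the whole of row `k`, read before row `k + 1` starts).
-/

theorem part_map {f : ℕ → ℕ} (hf : f 0 = 0) (l : List ℕ) (i : ℕ) :
    part (l.map f) i = f (part l i) := by
  simp only [part, List.getD_eq_getElem?_getD, List.getElem?_map]
  cases l[i]? <;> simp [hf]

theorem part_eq_zero_of_length_le {l : List ℕ} {i : ℕ} (h : l.length ≤ i) : part l i = 0 :=
  List.getD_eq_default _ _ h

theorem part_mem_or_eq_zero (l : List ℕ) (i : ℕ) : part l i ∈ l ∨ part l i = 0 := by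
  rcases Nat.lt_or_ge i l.length with hi | hi
  · exact .inl (by rw [part, List.getD_eq_getElem _ _ hi]; exact l.getElem_mem hi)
  · exact .inr (part_eq_zero_of_length_le hi)

theorem part_le_sum (l : List ℕ) (i : ℕ) : part l i ≤ l.sum := by
  rcases part_mem_or_eq_zero l i with h | h
  · exact List.le_sum_of_mem h
  · exact h ▸ Nat.zero_le _

theorem even_part {l : List ℕ} (h : ∀ x ∈ l, Even x) (i : ℕ) : Even (part l i) := by
  rcases part_mem_or_eq_zero l i with hi | hi
  · exact h _ hi
  · exact hi ▸ Even.zero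

theorem part_antitone {l : List ℕ} (hl : l.Pairwise (· ≥ ·)) : Antitone (part l) := by
  intro i i' h
  rcases Nat.lt_or_ge i' l.length with hi' | hi'
  · have hi : i < l.length := h.trans_lt hi'
    simp only [part, List.getD_eq_getElem _ _ hi, List.getD_eq_getElem _ _ hi']
    rcases h.eq_or_lt with rfl | hlt
    · exact le_rfl
    · exact List.pairwise_iff_getElem.1 hl i i' hi hi' hlt
  · exact (part_eq_zero_of_length_le hi').trans_le (Nat.zero_le _)

theorem finite_setOf_inSkew (nu lam : List ℕ) :
    {p : ℕ × ℕ | InSkew nu lam p.1 p.2}.Finite := by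
  refine ((Set.finite_Iio nu.length).prod (Set.finite_Iio nu.sum)).subset ?_
  rintro ⟨i, j⟩ ⟨-, hj⟩
  refine ⟨?_, hj.trans_le (part_le_sum nu i)⟩
  by_contra hi
  rw [part_eq_zero_of_length_le (not_lt.1 hi)] at hj
  exact Nat.not_lt_zero _ hj

namespace IsLRTableau

variable {nu lam mu : List ℕ} {T : ℕ → ℕ → ℕ}

theorem le_length (hT : IsLRTableau nu lam mu T) (i j : ℕ) : T i j ≤ mu.length := by
  by_contra! h
  obtain ⟨k, hk⟩ : ∃ k, T i j = k + 1 := Nat.exists_eq_add_one.2 (Nat.zero_lt_of_lt h)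
  have hfin : {p : ℕ × ℕ | T p.1 p.2 = k + 1}.Finite :=
    (finite_setOf_inSkew nu lam).subset fun p (hp : T p.1 p.2 = k + 1) =>
      (hT.support p.1 p.2).1 (hp ▸ k.succ_pos)
  have hempty := (Set.ncard_eq_zero hfin).1 <|
    (hT.content k).trans (part_eq_zero_of_length_le (by omega))
  exact hempty.subset (show (i, j) ∈ {p : ℕ × ℕ | T p.1 p.2 = k + 1} from hk)

end IsLRTableau

theorem finite_setOf_isLRTableau (nu lam mu : List ℕ) :
    {T : ℕ → ℕ → ℕ | IsLRTableau nu lam mu T}.Finite := by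
  set S := {p : ℕ × ℕ | InSkew nu lam p.1 p.2}
  have : Finite S := (finite_setOf_inSkew nu lam).to_subtype
  let restrict : (ℕ → ℕ → ℕ) → S → ℕ := fun T p => T p.1.1 p.1.2
  refine Set.Finite.of_finite_image (f := restrict) ?_ ?_
  · refine (Set.Finite.pi fun _ => Set.finite_Iic mu.length).subset ?_
    rintro _ ⟨T, hT, rfl⟩ p -
    exact hT.le_length _ _
  · intro T hT T' hT' hTT'
    funext i j
    by_cases hij : InSkew nu lam i j
    · exact congrFun hTT' ⟨(i, j), hij⟩
    · rw [Nat.eq_zero_of_not_pos (mt (hT.support i j).1 hij),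
        Nat.eq_zero_of_not_pos (mt (hT'.support i j).1 hij)]

theorem one_le_lrCoeff {nu lam mu : List ℕ} {T : ℕ → ℕ → ℕ} (hT : IsLRTableau nu lam mu T) :
    1 ≤ lrCoeff nu lam mu :=
  (Set.ncard_pos (finite_setOf_isLRTableau nu lam mu)).2 ⟨T, hT⟩

section RowFilling

variable {nu lam mu : List ℕ}

def rowFilling (nu lam : List ℕ) (i j : ℕ) : ℕ :=
  if part lam i ≤ j ∧ j < part nu i then i + 1 else 0

theorem rowFilling_of_inSkew {i j : ℕ} (h : InSkew nu lam i j) : rowFilling nu lam i j = i + 1 :=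
  if_pos h

theorem rowFilling_pos_iff {i j : ℕ} : 0 < rowFilling nu lam i j ↔ InSkew nu lam i j := by
  unfold rowFilling InSkew
  split_ifs <;> simp_all

theorem rowFilling_eq_succ_iff {k i j : ℕ} :
    rowFilling nu lam i j = k + 1 ↔ i = k ∧ InSkew nu lam k j := by
  unfold rowFilling InSkew
  split_ifs with h
  · constructor
    · intro hik
      obtain rfl : i = k := by omega
      exact ⟨rfl, h⟩
    · rintro ⟨rfl, -⟩
      rfl
  · constructor
    · exact False.elim
    · rintro ⟨rfl, hk⟩
      exact absurd hk h

theorem setOf_rowFilling_eq_succ (k : ℕ) :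
    {p : ℕ × ℕ | rowFilling nu lam p.1 p.2 = k + 1} = {k} ×ˢ Set.Ico (part lam k) (part nu k) := by
  ext ⟨i, j⟩
  simp [rowFilling_eq_succ_iff, InSkew]

theorem ncard_setOf_rowFilling_eq_succ (k : ℕ) :
    {p : ℕ × ℕ | rowFilling nu lam p.1 p.2 = k + 1}.ncard = part nu k - part lam k := by
  rw [setOf_rowFilling_eq_succ, Set.ncard_prod, Set.ncard_singleton, Set.ncard_Ico_nat, one_mul]

theorem rowFilling_lattice
    (hrows : ∀ k, part nu (k + 1) - part lam (k + 1) ≤ part nu k - part lam k) (r c k : ℕ) :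
    {p : ℕ × ℕ | rowFilling nu lam p.1 p.2 = k + 2 ∧ ReadingLE p.1 p.2 r c}.ncard ≤
    {p : ℕ × ℕ | rowFilling nu lam p.1 p.2 = k + 1 ∧ ReadingLE p.1 p.2 r c}.ncard := by
  rcases Nat.lt_or_ge r (k + 1) with hr | hr
  · have hempty :
        {p : ℕ × ℕ | rowFilling nu lam p.1 p.2 = k + 2 ∧ ReadingLE p.1 p.2 r c} = ∅ := by
      ext ⟨i, j⟩
      simp only [Set.mem_ofPred_eq, rowFilling_eq_succ_iff, ReadingLE, Set.mem_empty_iff_false,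
        iff_false]
      omega
    simp [hempty]
  · have hread_k : {p : ℕ × ℕ | rowFilling nu lam p.1 p.2 = k + 1 ∧ ReadingLE p.1 p.2 r c} =
        {p : ℕ × ℕ | rowFilling nu lam p.1 p.2 = k + 1} := by
      ext ⟨i, j⟩
      simp only [Set.mem_ofPred_eq, rowFilling_eq_succ_iff, ReadingLE, and_iff_left_iff_imp]
      rintro ⟨rfl, -⟩
      omega
    have hfin : {p : ℕ × ℕ | rowFilling nu lam p.1 p.2 = k + 1 + 1}.Finite := by
      rw [setOf_rowFilling_eq_succ]
      exact (Set.finite_singleton _).prod (Set.finite_Ico _ _)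
    calc _ ≤ {p : ℕ × ℕ | rowFilling nu lam p.1 p.2 = k + 1 + 1}.ncard :=
          Set.ncard_le_ncard (fun p hp => hp.1) hfin
      _ = part nu (k + 1) - part lam (k + 1) := ncard_setOf_rowFilling_eq_succ (k + 1)
      _ ≤ part nu k - part lam k := hrows k
      _ = _ := by rw [hread_k, ncard_setOf_rowFilling_eq_succ]

theorem isLRTableau_rowFilling (hsub : ∀ i, part lam i ≤ part nu i)
    (hmu : ∀ k, part mu k = part nu k - part lam k)
    (hrows : ∀ k, part nu (k + 1) - part lam (k + 1) ≤ part nu k - part lam k) :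
    IsLRTableau nu lam mu (rowFilling nu lam) where
  subset := hsub
  support _ _ := rowFilling_pos_iff
  row_weak _ _ _ hj hj' _ := by rw [rowFilling_of_inSkew hj, rowFilling_of_inSkew hj']
  col_strict _ _ _ hi hi' hlt := by
    rw [rowFilling_of_inSkew hi, rowFilling_of_inSkew hi']
    exact Nat.succ_lt_succ hlt
  content k := (ncard_setOf_rowFilling_eq_succ k).trans (hmu k).symm
  lattice := rowFilling_lattice hrows

end RowFilling

/-- If all parts of `λ` are even and `α = (λ₁/2, …, λ_n/2)`, then
`c^λ_{αα} ≥ 1`. -/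
theorem one_le_lrCoeff_half_half (lam : List ℕ)
    (hlam : IsPartition lam) (heven : ∀ x ∈ lam, Even x) :
    1 ≤ lrCoeff lam (lam.map (· / 2)) (lam.map (· / 2)) := by
  have hhalf : ∀ i, part (lam.map (· / 2)) i = part lam i / 2 := part_map rfl lam
  have hsub_half : ∀ i, part lam i - part lam i / 2 = part lam i / 2 := fun i => by
    obtain ⟨m, hm⟩ := even_part heven i
    omega
  refine one_le_lrCoeff (isLRTableau_rowFilling (fun i => ?_) (fun k => ?_) (fun k => ?_))
  · rw [hhalf]
    exact Nat.div_le_self _ _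
  · rw [hhalf, hsub_half]
  · rw [hhalf, hhalf, hsub_half, hsub_half]
    exact Nat.div_le_div_right (part_antitone hlam.1 k.le_succ)
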